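/- Let 𝐦 = (m_1,...,m_n) be positive integers with m = Σ m_i, let A_𝐦(x,y) = Σ_{π ∈ 𝔖_𝐦} x^{des(π)} y^{m+1-des(π)} with boundary convention π_0 = π_{m+1} = 0, and let 𝐦̄ be 𝐦 with an extra letter n+1 occurring once. Then A_{𝐦̄}(x,y) = T(A_𝐦(x,y)) where T = xy(∂/∂x + ∂/∂y). -/

import Mathlib

/-!
Every arrangement of `𝐦̄` arises exactly once by inserting the new largest letter into one of
the `m + 1` slots of an arrangement `π` of `𝐦`. With the boundary zeros, inserting it into a slot
that is a descent of `π` leaves `des` unchanged, while any other slot raises `des` by one. As `π`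
has `d = des π` descent slots, its monomial `x^d y^(m+1-d)` is replaced by
`d x^d y^(m+2-d) + (m+1-d) x^(d+1) y^(m+1-d) = T(x^d y^(m+1-d))`.
-/

open MvPolynomial

/-- Number of descents in `a :: rest`, counting consecutive pairs. -/
def desAux : List ℕ → ℕ
  | a :: b :: t => (if b < a then 1 else 0) + desAux (b :: t)
  | _ => 0

/-- The descent number of a word `w = π₁…π_m`, with the boundary convention
`π₀ = π_{m+1} = 0`. -/
def des (w : List ℕ) : ℕ := desAux (0 :: (w ++ [0]))

/-- The list of all distinct arrangements (multipermutations) of a multiset. -/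
noncomputable def arrangements (M : Multiset ℕ) : List (List ℕ) :=
  M.toList.permutations.dedup

/-- The multiset `{1^{m₁}, 2^{m₂}, …, n^{m_n}}` encoded by the list of
multiplicities `ms = [m₁, …, m_n]`. -/
def msetOf (ms : List ℕ) : Multiset ℕ :=
  ((List.range ms.length).flatMap fun i => List.replicate (ms.getD i 0) (i + 1) : List ℕ)

/-- The homogenized multiset Eulerian polynomial
`A_𝐦(x,y) = Σ_π x^{des π} y^{m+1-des π}`. -/
noncomputable def Abi (ms : List ℕ) : MvPolynomial (Fin 2) ℚ :=
  ((arrangements (msetOf ms)).map fun w =>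
    X 0 ^ des w * X 1 ^ ((msetOf ms).card + 1 - des w)).sum

/-- The multiset Eulerian polynomial `A_𝐦(x) = Σ_π x^{des π}`. -/
noncomputable def Auni (ms : List ℕ) : Polynomial ℚ :=
  ((arrangements (msetOf ms)).map fun w => Polynomial.X ^ des w).sum

/-- The Eulerian operator `T = xy(∂/∂x + ∂/∂y)`. -/
noncomputable def Teul (f : MvPolynomial (Fin 2) ℚ) : MvPolynomial (Fin 2) ℚ :=
  X 0 * X 1 * (pderiv (0 : Fin 2) f + pderiv (1 : Fin 2) f)


namespace List

variable {α : Type*}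

theorem insertIdx_append_of_le_length (c : α) :
    ∀ {j : ℕ} {l₁ : List α} (l₂ : List α), j ≤ l₁.length →
      (l₁ ++ l₂).insertIdx j c = l₁.insertIdx j c ++ l₂
  | 0, _, _, _ => rfl
  | j + 1, b :: t, l₂, hj => by
    simp only [cons_append, insertIdx_succ_cons,
      insertIdx_append_of_le_length c l₂ (Nat.le_of_succ_le_succ hj)]

theorem coe_insertIdx (c : α) {j : ℕ} {l : List α} (hj : j ≤ l.length) :
    ((l.insertIdx j c : List α) : Multiset α) = c ::ₘ l :=
  Multiset.coe_eq_coe.2 (perm_insertIdx c l hj)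

section DecidableEq

variable [DecidableEq α]

theorem idxOf_insertIdx_of_notMem {c : α} :
    ∀ {j : ℕ} {l : List α}, j ≤ l.length → c ∉ l → (l.insertIdx j c).idxOf c = j
  | 0, l, _, _ => by simp
  | j + 1, b :: t, hj, hc => by
    rw [mem_cons, not_or] at hc
    rw [insertIdx_succ_cons, idxOf_cons_ne _ (Ne.symm hc.1),
      idxOf_insertIdx_of_notMem (by simpa using hj) hc.2]

theorem insertIdx_idxOf_eraseIdx {c : α} {l : List α} (hc : c ∈ l) :
    (l.eraseIdx (l.idxOf c)).insertIdx (l.idxOf c) c = l := by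
  conv_rhs => rw [← insertIdx_eraseIdx_getElem (idxOf_lt_length_of_mem hc)]
  rw [getElem_idxOf]

end DecidableEq

end List

open Finset

theorem desAux_cons_eq_card_filter : ∀ (a : ℕ) (l : List ℕ),
    desAux (a :: l) = #{j ∈ range l.length | (a :: l).getD (j + 1) 0 < (a :: l).getD j 0}
  | _, [] => rfl
  | a, b :: t => by
    have ih := desAux_cons_eq_card_filter b t
    rw [card_filter] at ih
    rw [card_filter, List.length_cons, sum_range_succ']
    simp only [List.getD_cons_succ, List.getD_cons_zero, desAux, ih]
    exact add_comm _ _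

theorem desAux_insertIdx_of_forall_lt {c : ℕ} : ∀ {j a : ℕ} {l : List ℕ}, j < l.length →
    a < c → (∀ x ∈ l, x < c) →
    desAux ((a :: l).insertIdx (j + 1) c)
      = desAux (a :: l) + if (a :: l).getD (j + 1) 0 < (a :: l).getD j 0 then 0 else 1
  | 0, a, b :: t, _, ha, hl => by
    have hb : b < c := hl b (by simp)
    simp only [List.insertIdx_succ_cons, List.insertIdx_zero, desAux,
      List.getD_cons_succ, List.getD_cons_zero, if_neg (Nat.lt_asymm ha), if_pos hb]
    split <;> omega
  | j + 1, a, b :: t, hj, ha, hl => by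
    have ih := desAux_insertIdx_of_forall_lt (j := j) (Nat.lt_of_succ_lt_succ hj)
      (hl b (by simp)) (fun x hx => hl x (by simp [hx]))
    rw [List.insertIdx_succ_cons] at ih
    rw [List.insertIdx_succ_cons, List.insertIdx_succ_cons]
    simp only [desAux, List.getD_cons_succ] at ih ⊢
    omega

/-- Slot `j` of `w = π₁…π_m` is the pair `(π_j, π_{j+1})`, with `π₀ = π_{m+1} = 0`. -/
abbrev IsDescentSlot (w : List ℕ) (j : ℕ) : Prop :=
  (0 :: (w ++ [0])).getD (j + 1) 0 < (0 :: (w ++ [0])).getD j 0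

theorem des_insertIdx_of_forall_lt {c j : ℕ} {w : List ℕ} (hj : j ≤ w.length) (hc : 0 < c)
    (hw : ∀ x ∈ w, x < c) :
    des (w.insertIdx j c) = des w + if IsDescentSlot w j then 0 else 1 := by
  have hw0 : ∀ x ∈ w ++ [0], x < c := by
    simpa [or_imp, forall_and] using ⟨hw, hc⟩
  rw [des, des, ← List.insertIdx_append_of_le_length c [0] hj, ← List.insertIdx_succ_cons,
    desAux_insertIdx_of_forall_lt (by simpa using Nat.lt_succ_of_le hj) hc hw0]

theorem des_eq_card_filter (w : List ℕ) :
    des w = #{j ∈ range (w.length + 1) | IsDescentSlot w j} := by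
  rw [des, desAux_cons_eq_card_filter, List.length_append, List.length_singleton]

theorem des_le_length_add_one (w : List ℕ) : des w ≤ w.length + 1 :=
  (des_eq_card_filter w).trans_le <| (card_filter_le _ _).trans (card_range _).le

theorem Teul_sum {ι : Type*} (s : Finset ι) (f : ι → MvPolynomial (Fin 2) ℚ) :
    Teul (∑ i ∈ s, f i) = ∑ i ∈ s, Teul (f i) := by
  simp only [Teul, map_sum, ← sum_add_distrib, mul_sum]

theorem Teul_X_pow_mul_X_pow (a b : ℕ) :
    Teul (X 0 ^ a * X 1 ^ b) = a • (X 0 ^ a * X 1 ^ (b + 1)) + b • (X 0 ^ (a + 1) * X 1 ^ b) := by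
  rcases a with _ | a <;> rcases b with _ | b <;> simp [Teul] <;> ring

theorem sum_range_des_insertIdx {c : ℕ} {w : List ℕ} (hc : 0 < c) (hw : ∀ x ∈ w, x < c) :
    ∑ j ∈ range (w.length + 1),
      X 0 ^ des (w.insertIdx j c) * X 1 ^ (w.length + 2 - des (w.insertIdx j c))
      = Teul (X 0 ^ des w * X 1 ^ (w.length + 1 - des w) : MvPolynomial (Fin 2) ℚ) := by
  set k := des w
  have hk : k ≤ w.length + 1 := des_le_length_add_one w
  have hterm : ∀ j ∈ range (w.length + 1),
      (X 0 ^ des (w.insertIdx j c) * X 1 ^ (w.length + 2 - des (w.insertIdx j c))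
        : MvPolynomial (Fin 2) ℚ)
      = if IsDescentSlot w j then X 0 ^ k * X 1 ^ (w.length + 1 - k + 1)
        else X 0 ^ (k + 1) * X 1 ^ (w.length + 1 - k) := by
    intro j hj
    rw [des_insertIdx_of_forall_lt (Nat.le_of_lt_succ (mem_range.1 hj)) hc hw]
    split_ifs <;> congr 2 <;> omega
  have hdes : #{j ∈ range (w.length + 1) | IsDescentSlot w j} = k := (des_eq_card_filter w).symm
  have hasc : #{j ∈ range (w.length + 1) | ¬IsDescentSlot w j} = w.length + 1 - k := by
    rw [filter_not, card_sdiff_of_subset (filter_subset _ _), card_range, hdes]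
  rw [sum_congr rfl hterm, sum_ite, sum_const, sum_const, hdes, hasc, Teul_X_pow_mul_X_pow]

theorem mem_arrangements {M : Multiset ℕ} {w : List ℕ} :
    w ∈ arrangements M ↔ (w : Multiset ℕ) = M := by
  rw [arrangements, List.mem_dedup, List.mem_permutations, ← Multiset.coe_eq_coe,
    Multiset.coe_toList]

theorem length_of_mem_arrangements {M : Multiset ℕ} {w : List ℕ} (hw : w ∈ arrangements M) :
    w.length = Multiset.card M := by
  rw [← Multiset.coe_card, mem_arrangements.1 hw]

theorem injOn_insertIdx_arrangements {c : ℕ} {M : Multiset ℕ} (hc : c ∉ M) :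
    Set.InjOn (fun p : List ℕ × ℕ => p.1.insertIdx p.2 c)
      ↑((arrangements M).toFinset ×ˢ range (Multiset.card M + 1)) := by
  rintro ⟨w₁, j₁⟩ hp₁ ⟨w₂, j₂⟩ hp₂ (h : w₁.insertIdx j₁ c = w₂.insertIdx j₂ c)
  simp only [coe_product, Set.mem_prod, mem_coe, List.mem_toFinset, mem_range] at hp₁ hp₂
  have hidx : ∀ {w j}, w ∈ arrangements M → j < Multiset.card M + 1 →
      (w.insertIdx j c).idxOf c = j := fun hw hj =>
    List.idxOf_insertIdx_of_notMem (by rw [length_of_mem_arrangements hw]; omega)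
      (by rwa [← Multiset.mem_coe, mem_arrangements.1 hw])
  have hj : j₁ = j₂ := by rw [← hidx hp₁.1 hp₁.2, h, hidx hp₂.1 hp₂.2]
  subst hj
  rw [Prod.mk.injEq, List.insertIdx_injective _ _ h]
  simp

theorem toFinset_arrangements_cons {c : ℕ} {M : Multiset ℕ} :
    (arrangements (c ::ₘ M)).toFinset = ((arrangements M).toFinset ×ˢ
      range (Multiset.card M + 1)).image fun p => p.1.insertIdx p.2 c := by
  ext w'
  simp only [List.mem_toFinset, mem_image, mem_product, mem_range, Prod.exists]
  constructor
  · intro hw'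
    have hcw : c ∈ w' := by
      rw [← Multiset.mem_coe, mem_arrangements.1 hw']
      exact Multiset.mem_cons_self c M
    have hidx : w'.idxOf c < w'.length := List.idxOf_lt_length_of_mem hcw
    refine ⟨w'.eraseIdx (w'.idxOf c), w'.idxOf c, ⟨?_, ?_⟩, List.insertIdx_idxOf_eraseIdx hcw⟩
    · rw [mem_arrangements, ← Multiset.cons_inj_right c, ← mem_arrangements.1 hw',
        ← List.coe_insertIdx c (List.length_eraseIdx_of_lt hidx ▸ Nat.le_sub_one_of_lt hidx),
        List.insertIdx_idxOf_eraseIdx hcw]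
    · rwa [length_of_mem_arrangements hw', Multiset.card_cons] at hidx
  · rintro ⟨w, j, ⟨hw, hj⟩, rfl⟩
    rw [mem_arrangements, List.coe_insertIdx c (by rw [length_of_mem_arrangements hw]; omega),
      mem_arrangements.1 hw]

theorem sum_arrangements_cons {c : ℕ} {M : Multiset ℕ} (hc : c ∉ M) {β : Type*}
    [AddCommMonoid β] (f : List ℕ → β) :
    ∑ w ∈ (arrangements (c ::ₘ M)).toFinset, f w
      = ∑ w ∈ (arrangements M).toFinset,
          ∑ j ∈ range (Multiset.card M + 1), f (w.insertIdx j c) := by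
  rw [toFinset_arrangements_cons, sum_image (injOn_insertIdx_arrangements hc), sum_product]

noncomputable def desPoly (M : Multiset ℕ) : MvPolynomial (Fin 2) ℚ :=
  ∑ w ∈ (arrangements M).toFinset, X 0 ^ des w * X 1 ^ (Multiset.card M + 1 - des w)

theorem Abi_eq_desPoly (ms : List ℕ) : Abi ms = desPoly (msetOf ms) :=
  (List.sum_toFinset _ (List.nodup_dedup _)).symm

theorem desPoly_cons_of_forall_lt {c : ℕ} {M : Multiset ℕ} (hc : 0 < c) (hM : ∀ x ∈ M, x < c) :
    desPoly (c ::ₘ M) = Teul (desPoly M) := by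
  rw [desPoly, desPoly, sum_arrangements_cons (fun h => (hM c h).false), Teul_sum,
    Multiset.card_cons]
  refine sum_congr rfl fun w hw => ?_
  have hwM := List.mem_toFinset.1 hw
  have hwc : ∀ x ∈ w, x < c := fun x hx => hM x (by rw [← mem_arrangements.1 hwM]; exact hx)
  rw [← length_of_mem_arrangements hwM]
  exact sum_range_des_insertIdx hc hwc

theorem lt_of_mem_msetOf {ms : List ℕ} {x : ℕ} (hx : x ∈ msetOf ms) : x < ms.length + 1 := by
  simp only [msetOf, Multiset.mem_coe, List.mem_flatMap, List.mem_range,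
    List.mem_replicate] at hx
  obtain ⟨i, hi, -, rfl⟩ := hx
  omega

theorem msetOf_append_one (ms : List ℕ) :
    msetOf (ms ++ [1]) = (ms.length + 1) ::ₘ msetOf ms := by
  have hprefix : (List.range ms.length).flatMap
      (fun i => List.replicate ((ms ++ [1]).getD i 0) (i + 1))
        = (List.range ms.length).flatMap fun i => List.replicate (ms.getD i 0) (i + 1) :=
    List.flatMap_congr fun i hi => by rw [List.getD_append _ _ _ _ (List.mem_range.1 hi)]
  rw [msetOf, msetOf, List.length_append, List.length_singleton, List.range_succ,
    List.flatMap_append, hprefix, ← Multiset.coe_add, add_comm]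
  simp

theorem Abi_append_one_general (ms : List ℕ) :
    Abi (ms ++ [1]) = Teul (Abi ms) := by
  rw [Abi_eq_desPoly, Abi_eq_desPoly, msetOf_append_one]
  exact desPoly_cons_of_forall_lt ms.length.succ_pos fun _ => lt_of_mem_msetOf

/-- Adjoining a new largest letter `n+1` with multiplicity one corresponds to
applying the operator `T`: `A_{𝐦̄}(x,y) = T(A_𝐦(x,y))`. -/
theorem Abi_append_one (ms : List ℕ) (hms : ∀ i ∈ ms, 0 < i) :
    Abi (ms ++ [1]) = Teul (Abi ms) :=
  Abi_append_one_general ms
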